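/- Let Y be a subset of the finite set X. For every minimal permutator word w of Y there exists a straight minimal permutator word red(w) ∈ M_S(Y) obtained from w by deleting some (possibly zero) letters, such that the realization of red(w) equals the realization of w as a transformation of X. (In general red(w) is not unique.) -/
import Mathlib


/-- Realization of a word (list of generators), applied left to right. -/
def realize {X : Type*} (w : List (X → X)) : X → X :=
  fun x => w.foldl (fun a f => f a) x

/-- `w` is a word over the generator set `T`: a nonempty list of elements of `T`. -/
def IsWordOver {X : Type*} (T : Finset (X → X)) (w : List (X → X)) : Prop :=
  w ≠ [] ∧ ∀ f ∈ w, f ∈ T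

/-- A word is straight if no nonempty proper prefix realizes the identity, and distinct
nonempty prefixes realize distinct transformations. -/
def IsStraight {X : Type*} (w : List (X → X)) : Prop :=
  (∀ k, 1 ≤ k → k < w.length → realize (w.take k) ≠ id) ∧
  (∀ k l, 1 ≤ k → k ≤ w.length → 1 ≤ l → l ≤ w.length →
    realize (w.take k) = realize (w.take l) → k = l)

/-- The semigroup generated by `T`: all transformations realized by nonempty words over `T`. -/
def SgpGen {X : Type*} (T : Finset (X → X)) : Set (X → X) :=
  {s | ∃ w : List (X → X), IsWordOver T w ∧ realize w = s}

/-- A permutator word of `Y`: a word over `T` whose realization maps `Y` onto `Y`. -/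
def Permutator {X : Type*} (T : Finset (X → X)) (Y : Set X) (w : List (X → X)) : Prop :=
  IsWordOver T w ∧ realize w '' Y = Y

/-- A minimal permutator word of `Y`: a permutator word not factorizable into two
permutator words. -/
def MinPermutator {X : Type*} (T : Finset (X → X)) (Y : Set X) (w : List (X → X)) : Prop :=
  Permutator T Y w ∧ ¬ ∃ u v, w = u ++ v ∧ Permutator T Y u ∧ Permutator T Y v

/-- The full permutator semigroup `Perm(Y)` of elements of `⟨T⟩` mapping `Y` onto `Y`. -/
def PermSet {X : Type*} (T : Finset (X → X)) (Y : Set X) : Set (X → X) :=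
  {s | s ∈ SgpGen T ∧ s '' Y = Y}

lemma realize_append {X : Type*} (u v : List (X → X)) (x : X) :
    realize (u ++ v) x = realize v (realize u x) := by
  simp [realize, List.foldl_append]

lemma prefix_not_perm {X : Type*} {T : Finset (X → X)} {Y : Set X} {w : List (X → X)}
    (hw : MinPermutator T Y w) {k : ℕ} (hk1 : 1 ≤ k) (hk2 : k < w.length) :
    realize (w.take k) '' Y ≠ Y := by
  intro himg
  apply hw.2
  refine ⟨w.take k, w.drop k, (List.take_append_drop k w).symm, ?_, ?_⟩
  · refine ⟨⟨?_, fun f hf => hw.1.1.2 f ((List.take_sublist k w).mem hf)⟩, himg⟩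
    intro h
    have h2 : (w.take k).length = 0 := by rw [h]; rfl
    rw [List.length_take] at h2
    omega
  · refine ⟨⟨?_, fun f hf => hw.1.1.2 f ((List.drop_sublist k w).mem hf)⟩, ?_⟩
    · intro h
      have h2 : (w.drop k).length = 0 := by rw [h]; rfl
      rw [List.length_drop] at h2
      omega
    · have hcomp : realize w = fun x => realize (w.drop k) (realize (w.take k) x) := by
        funext x
        rw [← realize_append, List.take_append_drop]
      have := hw.1.2
      rw [hcomp] at this
      calc realize (w.drop k) '' Y = realize (w.drop k) '' (realize (w.take k) '' Y) := by
            rw [himg]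
        _ = Y := by rw [← Set.image_image] at this; exact this

lemma delete_min {X : Type*} {T : Finset (X → X)} {Y : Set X} {w : List (X → X)}
    (hw : MinPermutator T Y w) {k l : ℕ} (hk : 1 ≤ k) (hkl : k < l) (hl : l ≤ w.length) :
    realize (w.take k) = realize (w.take l) →
    MinPermutator T Y (w.take k ++ w.drop l) ∧ (w.take k ++ w.drop l).Sublist w ∧
      realize (w.take k ++ w.drop l) = realize w ∧ (w.take k ++ w.drop l).length < w.length := by
  intro heq
  have hlenk : (w.take k).length = k := by rw [List.length_take]; omega
  have hreal : realize (w.take k ++ w.drop l) = realize w := by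
    funext x
    rw [realize_append, heq, ← realize_append, List.take_append_drop]
  have hsub : (w.take k ++ w.drop l).Sublist w := by
    have h1 : (w.take k).Sublist (w.take l) := by
      have : (w.take l).take k = w.take k := by rw [List.take_take]; congr 1; omega
      rw [← this]; exact List.take_sublist _ _
    have := h1.append (List.Sublist.refl (w.drop l))
    rwa [List.take_append_drop] at this
  have hlen : (w.take k ++ w.drop l).length < w.length := by
    rw [List.length_append, hlenk, List.length_drop]; omega
  refine ⟨⟨⟨⟨?_, fun f hf => hw.1.1.2 f (hsub.mem hf)⟩, by rw [hreal]; exact hw.1.2⟩, ?_⟩,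
    hsub, hreal, hlen⟩
  · intro h
    have h2 : (w.take k ++ w.drop l).length = 0 := by rw [h]; rfl
    rw [List.length_append, hlenk] at h2
    omega
  · rintro ⟨u, v, hsplit, hu, hv⟩
    set j := u.length with hj
    have hj1 : 1 ≤ j := List.length_pos_iff.mpr hu.1.1
    have hju : u = (w.take k ++ w.drop l).take j := by
      rw [hsplit, List.take_left]
    have hjlt : j < (w.take k ++ w.drop l).length := by
      have hv0 : 0 < v.length := List.length_pos_iff.mpr hv.1.1
      rw [hsplit, List.length_append]; omega
    rw [List.length_append, hlenk, List.length_drop] at hjlt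
    rcases le_or_gt j k with hjk | hjk
    · -- u = w.take j
      have hu_eq : u = w.take j := by
        rw [hju, List.take_append_of_le_length (by omega), List.take_take]
        congr 1; omega
      exact prefix_not_perm hw hj1 (by omega) (hu_eq ▸ hu.2)
    · -- realize u = realize (w.take (l + (j - k)))
      have hu_eq : u = w.take k ++ (w.drop l).take (j - k) := by
        rw [hju, List.take_append, hlenk,
          List.take_of_length_le (by rw [hlenk]; omega)]
      have hreal_u : realize u = realize (w.take (l + (j - k))) := by
        funext x
        rw [hu_eq, realize_append, heq, ← realize_append, ← List.take_add]
      exact prefix_not_perm hw (by omega) (by omega) (hreal_u ▸ hu.2)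

/-- Every minimal permutator word of `Y` reduces, by deleting letters, to a straight
minimal permutator word realizing the same transformation of `X`. -/
theorem minimal_permutator_reduces_to_straight
    (X : Type*) [Fintype X] [Nonempty X] (T : Finset (X → X)) (Y : Set X)
    (w : List (X → X)) (hw : MinPermutator T Y w) :
    ∃ w' : List (X → X), (MinPermutator T Y w' ∧ IsStraight w') ∧
      w'.Sublist w ∧ realize w' = realize w := by
  obtain ⟨n, hn⟩ : ∃ n, w.length ≤ n := ⟨w.length, le_refl _⟩
  induction n generalizing w with
  | zero =>
    exact absurd (List.length_eq_zero_iff.mp (Nat.le_zero.mp hn)) hw.1.1.1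
  | succ n ih =>
    by_cases hs : IsStraight w
    · exact ⟨w, ⟨hw, hs⟩, List.Sublist.refl w, rfl⟩
    · rw [IsStraight, not_and_or] at hs
      rcases hs with hs | hs
      · push_neg at hs
        obtain ⟨m, hm1, hm2, hmid⟩ := hs
        exact absurd (by rw [hmid]; simp) (prefix_not_perm hw hm1 hm2)
      · push_neg at hs
        obtain ⟨a, b, ha1, ha2, hb1, hb2, heq, hne⟩ := hs
        have key : ∀ k l : ℕ, 1 ≤ k → k < l → l ≤ w.length →
            realize (w.take k) = realize (w.take l) →
            ∃ w' : List (X → X), (MinPermutator T Y w' ∧ IsStraight w') ∧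
              w'.Sublist w ∧ realize w' = realize w := by
          intro k l hk hkl hl heq'
          obtain ⟨hmin, hsub, hreal, hlen⟩ := delete_min hw hk hkl hl heq'
          obtain ⟨w', hw', hsub', hreal'⟩ := ih _ hmin (by omega)
          exact ⟨w', hw', hsub'.trans hsub, hreal'.trans hreal⟩
        rcases lt_or_gt_of_ne hne with h | h
        · exact key a b ha1 h hb2 heq
        · exact key b a hb1 h ha2 heq.symm
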